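/- arXiv:2410.00525 — 3 statements merged into one kernel-verified Lean document; each statement's English description precedes it below -/
import Mathlib

section
/- Under the stated smoothness assumptions on ξ, let a : ℝ → ℝ be continuously differentiable, κ > 0, and define the matrix field D(q) := κ(P⊥(q) + a(ξ(q)) P(q)) = κ(I_d + (a(ξ(q)) − 1)P(q)). Then for every q ∈ ℝ^d, div D(q) = κ (a(ξ(q)) − 1) [ (∇²ξ(q)∇ξ(q))/‖∇ξ(q)‖² + (Δξ(q)/‖∇ξ(q)‖²) ∇ξ(q) − 2 ((∇ξ(q)ᵀ∇²ξ(q)∇ξ(q))/‖∇ξ(q)‖⁴) ∇ξ(q) ] + κ a'(ξ(q)) ∇ξ(q). -/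
/-!
Write `D = κ (I + φ P)` with `φ = a ∘ ξ - 1`. The identity contributes nothing, and the Leibniz
rule gives `div (φ P) = P ∇φ + φ div P`. Since `∇φ = a'(ξ) ∇ξ` and `P ∇ξ = ∇ξ`, the first term is
`a'(ξ) ∇ξ`. For the second, the quotient rule applied to `P_ij = ∂_i ξ ∂_j ξ / ‖∇ξ‖²`, together
with `∂_j ‖∇ξ‖² = 2 (∇ξᵀ ∇²ξ)_j`, gives the bracket once summed over `j`.
-/

open Matrix BigOperators

/-- Partial derivative `∂_j f (q)` of a scalar field on `ℝ^d`. -/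
noncomputable def pdrv {d : ℕ} (j : Fin d) (f : (Fin d → ℝ) → ℝ) (q : Fin d → ℝ) : ℝ :=
  fderiv ℝ f q (Pi.single j 1)

/-- Gradient `∇f(q)` of a scalar field on `ℝ^d`. -/
noncomputable def gradv {d : ℕ} (f : (Fin d → ℝ) → ℝ) (q : Fin d → ℝ) : Fin d → ℝ :=
  fun j => pdrv j f q

/-- Hessian matrix `∇²f(q)`, with entries `(i,j) ↦ ∂_j ∂_i f(q)`. -/
noncomputable def hessM {d : ℕ} (f : (Fin d → ℝ) → ℝ) (q : Fin d → ℝ) :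
    Matrix (Fin d) (Fin d) ℝ :=
  Matrix.of fun i j => pdrv j (fun q' => pdrv i f q') q

/-- Laplacian `Δf(q)`. -/
noncomputable def lapl {d : ℕ} (f : (Fin d → ℝ) → ℝ) (q : Fin d → ℝ) : ℝ :=
  ∑ i, hessM f q i i

/-- Divergence of a matrix field, `(div M)_i = ∑_j ∂_j M_{ij}`. -/
noncomputable def divMat {d : ℕ} (M : (Fin d → ℝ) → Matrix (Fin d) (Fin d) ℝ)
    (q : Fin d → ℝ) : Fin d → ℝ :=
  fun i => ∑ j, pdrv j (fun q' => M q' i j) q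

/-- The projection field `P(q) = ∇ξ(q) ⊗ ∇ξ(q)/‖∇ξ(q)‖²`. -/
noncomputable def projP {d : ℕ} (ξ : (Fin d → ℝ) → ℝ) (q : Fin d → ℝ) :
    Matrix (Fin d) (Fin d) ℝ :=
  Matrix.of fun i j => gradv ξ q i * gradv ξ q j / (∑ k, gradv ξ q k ^ 2)

theorem sum_sq_ne_zero_of_ne_zero {ι : Type*} [Fintype ι] {v : ι → ℝ} (h : v ≠ 0) :
    ∑ k, v k ^ 2 ≠ 0 := by
  simpa [dotProduct, sq] using dotProduct_self_eq_zero.not.mpr h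

section PartialDerivative

variable {d : ℕ} {f g : (Fin d → ℝ) → ℝ} {q : Fin d → ℝ} (j : Fin d)

theorem gradv_apply : gradv f q j = pdrv j f q := rfl

theorem hessM_apply (i : Fin d) : hessM f q i j = pdrv j (pdrv i f) q := rfl

theorem pdrv_mul (hf : DifferentiableAt ℝ f q) (hg : DifferentiableAt ℝ g q) :
    pdrv j (fun x => f x * g x) q = pdrv j f q * g q + f q * pdrv j g q := by
  simp only [pdrv, fderiv_fun_mul hf hg, _root_.add_apply, _root_.smul_apply, smul_eq_mul]
  ring

theorem pdrv_pow (hf : DifferentiableAt ℝ f q) (n : ℕ) :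
    pdrv j (fun x => f x ^ n) q = n * f q ^ (n - 1) * pdrv j f q := by
  simp [pdrv, fderiv_fun_pow n hf]

theorem pdrv_sum {ι : Type*} (s : Finset ι) {F : ι → (Fin d → ℝ) → ℝ}
    (hF : ∀ k ∈ s, DifferentiableAt ℝ (F k) q) :
    pdrv j (fun x => ∑ k ∈ s, F k x) q = ∑ k ∈ s, pdrv j (F k) q := by
  simp only [pdrv, fderiv_fun_sum hF, _root_.sum_apply]

theorem pdrv_comp {φ : ℝ → ℝ} (hφ : DifferentiableAt ℝ φ (f q)) (hf : DifferentiableAt ℝ f q) :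
    pdrv j (fun x => φ (f x)) q = deriv φ (f q) * pdrv j f q := by
  change fderiv ℝ (φ ∘ f) q _ = _
  rw [(hφ.hasDerivAt.comp_hasFDerivAt q hf.hasFDerivAt).fderiv, _root_.smul_apply, smul_eq_mul,
    pdrv]

theorem pdrv_inv (hf : DifferentiableAt ℝ f q) (hq : f q ≠ 0) :
    pdrv j (fun x => (f x)⁻¹) q = -pdrv j f q / f q ^ 2 := by
  rw [pdrv_comp j (φ := Inv.inv) (differentiableAt_inv hq) hf, deriv_inv]
  ring

theorem pdrv_div (hf : DifferentiableAt ℝ f q) (hg : DifferentiableAt ℝ g q) (hq : g q ≠ 0) :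
    pdrv j (fun x => f x / g x) q = (pdrv j f q * g q - f q * pdrv j g q) / g q ^ 2 := by
  simp only [div_eq_mul_inv]
  rw [pdrv_mul (g := fun x => (g x)⁻¹) j hf (hg.fun_inv hq), pdrv_inv j hg hq]
  field_simp
  ring

end PartialDerivative

section Divergence

variable {d : ℕ} {q : Fin d → ℝ}

theorem gradv_comp {f : (Fin d → ℝ) → ℝ} {φ : ℝ → ℝ} (hφ : DifferentiableAt ℝ φ (f q))
    (hf : DifferentiableAt ℝ f q) :
    gradv (fun x => φ (f x)) q = deriv φ (f q) • gradv f q :=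
  funext fun j => pdrv_comp j hφ hf

theorem divMat_const_smul (c : ℝ) (M : (Fin d → ℝ) → Matrix (Fin d) (Fin d) ℝ) :
    divMat (fun x => c • M x) q = c • divMat M q := by
  funext i
  simp only [divMat, Matrix.smul_apply, smul_eq_mul, Pi.smul_apply, Finset.mul_sum]
  refine Finset.sum_congr rfl fun j _ => ?_
  change fderiv ℝ (c • fun x => M x i j) q _ = _
  rw [fderiv_const_smul_field]
  rfl

theorem divMat_const_add (A : Matrix (Fin d) (Fin d) ℝ)
    (M : (Fin d → ℝ) → Matrix (Fin d) (Fin d) ℝ) :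
    divMat (fun x => A + M x) q = divMat M q := by
  funext i
  simp only [divMat, Matrix.add_apply, pdrv, fderiv_const_add]

theorem divMat_smul {φ : (Fin d → ℝ) → ℝ} {M : (Fin d → ℝ) → Matrix (Fin d) (Fin d) ℝ}
    (hφ : DifferentiableAt ℝ φ q) (hM : ∀ i j, DifferentiableAt ℝ (fun x => M x i j) q) :
    divMat (fun x => φ x • M x) q = M q *ᵥ gradv φ q + φ q • divMat M q := by
  funext i
  simp only [divMat, Matrix.smul_apply, smul_eq_mul, pdrv_mul _ hφ (hM i _),
    Finset.sum_add_distrib, Pi.add_apply, Pi.smul_apply, Finset.mul_sum]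
  congr 1
  exact Finset.sum_congr rfl fun j _ => mul_comm _ _

end Divergence

section Projection

variable {d : ℕ} {ξ : (Fin d → ℝ) → ℝ} {q : Fin d → ℝ}

theorem differentiable_pdrv (hξ : ContDiff ℝ 2 ξ) (k : Fin d) : Differentiable ℝ (pdrv k ξ) :=
  ((hξ.fderiv_right le_rfl).clm_apply contDiff_const).differentiable one_ne_zero

theorem projP_mulVec_gradv (hN : ∑ k, gradv ξ q k ^ 2 ≠ 0) :
    projP ξ q *ᵥ gradv ξ q = gradv ξ q := by
  funext i
  simp only [mulVec, dotProduct, projP, of_apply]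
  calc ∑ j, gradv ξ q i * gradv ξ q j / (∑ k, gradv ξ q k ^ 2) * gradv ξ q j
      = gradv ξ q i / (∑ k, gradv ξ q k ^ 2) * ∑ j, gradv ξ q j ^ 2 := by
        rw [Finset.mul_sum]
        exact Finset.sum_congr rfl fun j _ => by ring
    _ = gradv ξ q i := div_mul_cancel₀ _ hN

theorem differentiableAt_sum_sq_gradv (hg : ∀ k, DifferentiableAt ℝ (pdrv k ξ) q) :
    DifferentiableAt ℝ (fun x => ∑ k, gradv ξ x k ^ 2) q :=
  DifferentiableAt.fun_sum fun k _ => (hg k).fun_pow 2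

theorem differentiableAt_projP_apply (hg : ∀ k, DifferentiableAt ℝ (pdrv k ξ) q)
    (hN : ∑ k, gradv ξ q k ^ 2 ≠ 0) (i j : Fin d) :
    DifferentiableAt ℝ (fun x => projP ξ x i j) q := by
  simp only [projP, of_apply, div_eq_mul_inv]
  exact ((hg i).mul (hg j)).mul ((differentiableAt_sum_sq_gradv hg).fun_inv hN)

theorem pdrv_sum_sq_gradv (hg : ∀ k, DifferentiableAt ℝ (pdrv k ξ) q) (j : Fin d) :
    pdrv j (fun x => ∑ k, gradv ξ x k ^ 2) q = 2 * (gradv ξ q ᵥ* hessM ξ q) j := by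
  simp only [gradv_apply, vecMul, dotProduct, hessM_apply, Finset.mul_sum]
  rw [pdrv_sum j _ fun k _ => (hg k).fun_pow 2]
  exact Finset.sum_congr rfl fun k _ => by
    rw [pdrv_pow j (hg k)]
    ring

theorem pdrv_projP_apply (hg : ∀ k, DifferentiableAt ℝ (pdrv k ξ) q)
    (hN : ∑ k, gradv ξ q k ^ 2 ≠ 0) (i j : Fin d) :
    pdrv j (fun x => projP ξ x i j) q
      = hessM ξ q i j * gradv ξ q j / (∑ k, gradv ξ q k ^ 2)
        + gradv ξ q i / (∑ k, gradv ξ q k ^ 2) * hessM ξ q j j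
        - 2 * gradv ξ q i / (∑ k, gradv ξ q k ^ 2) ^ 2
          * (gradv ξ q j * (gradv ξ q ᵥ* hessM ξ q) j) := by
  simp only [projP, of_apply]
  rw [pdrv_div (f := fun x => gradv ξ x i * gradv ξ x j) j ((hg i).mul (hg j))
      (differentiableAt_sum_sq_gradv hg) hN,
    pdrv_mul (f := fun x => gradv ξ x i) (g := fun x => gradv ξ x j) j (hg i) (hg j),
    pdrv_sum_sq_gradv hg]
  simp only [gradv_apply, hessM_apply]
  field_simp

theorem divMat_projP (hg : ∀ k, DifferentiableAt ℝ (pdrv k ξ) q)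
    (hN : ∑ k, gradv ξ q k ^ 2 ≠ 0) (i : Fin d) :
    divMat (projP ξ) q i
      = (hessM ξ q *ᵥ gradv ξ q) i / (∑ k, gradv ξ q k ^ 2)
        + lapl ξ q / (∑ k, gradv ξ q k ^ 2) * gradv ξ q i
        - 2 * (gradv ξ q ⬝ᵥ (hessM ξ q *ᵥ gradv ξ q)) / (∑ k, gradv ξ q k ^ 2) ^ 2
          * gradv ξ q i := by
  have hHg : ∑ j, gradv ξ q j * (gradv ξ q ᵥ* hessM ξ q) j
      = gradv ξ q ⬝ᵥ (hessM ξ q *ᵥ gradv ξ q) := by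
    rw [dotProduct_mulVec, dotProduct_comm]
    rfl
  simp only [divMat, pdrv_projP_apply hg hN, Finset.sum_add_distrib, Finset.sum_sub_distrib,
    ← Finset.mul_sum, ← Finset.sum_div, hHg]
  rw [lapl, show (hessM ξ q *ᵥ gradv ξ q) i = ∑ j, hessM ξ q i j * gradv ξ q j from rfl]
  ring

end Projection

theorem div_diffusion_field_general (d : ℕ) (ξ : (Fin d → ℝ) → ℝ)
    (hξ : ContDiff ℝ 2 ξ) (hgrad : ∀ q, gradv ξ q ≠ 0)
    (a : ℝ → ℝ) (ha : ContDiff ℝ 1 a) (κ : ℝ) (q : Fin d → ℝ) :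
    ∀ i, divMat
        (fun q' => κ • ((1 : Matrix (Fin d) (Fin d) ℝ) + (a (ξ q') - 1) • projP ξ q')) q i
      = κ * (a (ξ q) - 1) *
          ((hessM ξ q *ᵥ gradv ξ q) i / (∑ k, gradv ξ q k ^ 2)
            + lapl ξ q / (∑ k, gradv ξ q k ^ 2) * gradv ξ q i
            - 2 * (gradv ξ q ⬝ᵥ (hessM ξ q *ᵥ gradv ξ q)) / (∑ k, gradv ξ q k ^ 2) ^ 2
                * gradv ξ q i)
        + κ * deriv a (ξ q) * gradv ξ q i := by
  intro i
  have hg : ∀ k, DifferentiableAt ℝ (pdrv k ξ) q := fun k => differentiable_pdrv hξ k q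
  have hN : ∑ k, gradv ξ q k ^ 2 ≠ 0 := sum_sq_ne_zero_of_ne_zero (hgrad q)
  have hξq : DifferentiableAt ℝ ξ q := hξ.differentiable two_ne_zero q
  have haq : DifferentiableAt ℝ (fun t => a t - 1) (ξ q) :=
    (ha.differentiable one_ne_zero _).sub_const 1
  rw [divMat_const_smul, divMat_const_add,
    divMat_smul (φ := fun x => a (ξ x) - 1) (haq.comp q hξq) (differentiableAt_projP_apply hg hN),
    gradv_comp (φ := fun t => a t - 1) haq hξq, mulVec_smul, projP_mulVec_gradv hN, deriv_sub_const]
  simp only [Pi.smul_apply, Pi.add_apply, smul_eq_mul, divMat_projP hg hN]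
  ring

/-- Divergence of the diffusion field `D(q) = κ(I + (a(ξ(q)) − 1)P(q))`:
`div D = κ(a(ξ) − 1)[∇²ξ∇ξ/‖∇ξ‖² + (Δξ/‖∇ξ‖²)∇ξ − 2(∇ξᵀ∇²ξ∇ξ/‖∇ξ‖⁴)∇ξ] + κ a'(ξ)∇ξ`. -/
theorem div_diffusion_field (d : ℕ) (ξ : (Fin d → ℝ) → ℝ)
    (hξ : ContDiff ℝ 2 ξ) (hgrad : ∀ q, gradv ξ q ≠ 0)
    (a : ℝ → ℝ) (ha : ContDiff ℝ 1 a) (κ : ℝ) (hκ : 0 < κ) (q : Fin d → ℝ) :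
    ∀ i, divMat
        (fun q' => κ • ((1 : Matrix (Fin d) (Fin d) ℝ) + (a (ξ q') - 1) • projP ξ q')) q i
      = κ * (a (ξ q) - 1) *
          ((hessM ξ q *ᵥ gradv ξ q) i / (∑ k, gradv ξ q k ^ 2)
            + lapl ξ q / (∑ k, gradv ξ q k ^ 2) * gradv ξ q i
            - 2 * (gradv ξ q ⬝ᵥ (hessM ξ q *ᵥ gradv ξ q)) / (∑ k, gradv ξ q k ^ 2) ^ 2
                * gradv ξ q i)
        + κ * deriv a (ξ q) * gradv ξ q i :=
  div_diffusion_field_general d ξ hξ hgrad a ha κ q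
end

section
/- Let β > 0, let F : ℝ → ℝ be differentiable, let σ² : ℝ → ℝ and a : ℝ → ℝ be differentiable functions, and let b : ℝ → ℝ satisfy b(z) = −σ²(z) F'(z) + β⁻¹ (σ²)'(z) for all z. Define b_a(z) := a(z) b(z) + β⁻¹ a'(z) σ²(z) and σ_a²(z) := a(z) σ²(z). Then for all z ∈ ℝ, b_a(z) = −σ_a²(z) F'(z) + β⁻¹ (σ_a²)'(z). -/
theorem drift_noise_relation_general (β : ℝ) (F σsq a b : ℝ → ℝ)
    (hσsq : Differentiable ℝ σsq) (ha : Differentiable ℝ a)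
    (hb : ∀ z, b z = - σsq z * deriv F z + β⁻¹ * deriv σsq z) :
    ∀ z, a z * b z + β⁻¹ * deriv a z * σsq z
      = -(a z * σsq z) * deriv F z + β⁻¹ * deriv (fun y => a y * σsq y) z := by
  intro z
  rw [deriv_fun_mul (ha z) (hσsq z), hb z]
  ring

/-- Drift–noise compatibility identity: if `b = −σ²F' + β⁻¹(σ²)'`, then the modified drift
`b_a = a b + β⁻¹ a' σ²` and squared diffusion `σ_a² = a σ²` satisfy
`b_a = −σ_a² F' + β⁻¹ (σ_a²)'`. -/
theorem drift_noise_relation (β : ℝ) (hβ : 0 < β) (F σsq a b : ℝ → ℝ)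
    (hF : Differentiable ℝ F) (hσsq : Differentiable ℝ σsq) (ha : Differentiable ℝ a)
    (hb : ∀ z, b z = - σsq z * deriv F z + β⁻¹ * deriv σsq z) :
    ∀ z, a z * b z + β⁻¹ * deriv a z * σsq z
      = -(a z * σsq z) * deriv F z + β⁻¹ * deriv (fun y => a y * σsq y) z :=
  drift_noise_relation_general β F σsq a b hσsq ha hb
end

section
/- Let X be a set, S : X → X a map with S ∘ S = id, φ : X → X a map, and A ⊆ X. Define B := { x ∈ A : S(φ(x)) ∈ A and φ(S(φ(x))) = S(x) }, and define φʳᵉᵛ : X → X by φʳᵉᵛ(x) = φ(x) if x ∈ B and φʳᵉᵛ(x) = S(x) otherwise. Then S ∘ φʳᵉᵛ ∘ S ∘ φʳᵉᵛ = id on X. -/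
/-!
Off the set `B` of checked configurations, `S ∘ φʳᵉᵛ = S ∘ S` is the identity; on `B` it is
`S ∘ φ`, which maps `B` into itself and is an involution there, precisely because the
reversibility check `φ (S (φ x)) = S x` holds. A map that is an involution on a set it
preserves and the identity elsewhere is an involution, which is the claim.
-/

open scoped Classical

namespace Function

theorem Involutive.piecewise_id {X : Type*} {B : Set X} [DecidablePred (· ∈ B)] {g : X → X}
    (hmaps : Set.MapsTo g B B) (hinv : ∀ x ∈ B, g (g x) = x) :
    Involutive (B.piecewise g id) := by
  intro x
  by_cases hx : x ∈ B
  · rw [B.piecewise_eq_of_mem g id hx, B.piecewise_eq_of_mem g id (hmaps hx), hinv x hx]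
  · rw [B.piecewise_eq_of_notMem g id hx, id, B.piecewise_eq_of_notMem g id hx, id]

end Function

def reversibilityCheckSet {X : Type*} (S φ : X → X) (A : Set X) : Set X :=
  {x ∈ A | S (φ x) ∈ A ∧ φ (S (φ x)) = S x}

section ReversibilityCheck

variable {X : Type*} {S : X → X} (φ : X → X) (A : Set X)

theorem Function.Involutive.mapsTo_reversibilityCheckSet (hS : S.Involutive) :
    Set.MapsTo (S ∘ φ) (reversibilityCheckSet S φ A) (reversibilityCheckSet S φ A) := by
  rintro x ⟨hxA, hSφxA, hrev⟩
  refine ⟨hSφxA, ?_, ?_⟩ <;> simp only [Function.comp_apply, hrev, hS x, hS (φ x), hxA]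

theorem Function.Involutive.comp_self_apply_of_mem_reversibilityCheckSet (hS : S.Involutive)
    {x : X} (hx : x ∈ reversibilityCheckSet S φ A) : S (φ (S (φ x))) = x := by
  rw [hx.2.2, hS x]

end ReversibilityCheck

/-- Reversibility of the numerical flow with reversibility checks: if `S ∘ S = id` and
`φʳᵉᵛ` equals `φ` on the set `B` of configurations passing the forward-solvability,
backward-solvability and reversibility checks, and `S` elsewhere, then
`S ∘ φʳᵉᵛ ∘ S ∘ φʳᵉᵛ = id`. -/
theorem reversibility_check_flow {X : Type*} (S φ : X → X) (hS : S ∘ S = id) (A : Set X) :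
    let B : Set X := {x ∈ A | S (φ x) ∈ A ∧ φ (S (φ x)) = S x}
    let φrev : X → X := fun x => if x ∈ B then φ x else S x
    S ∘ φrev ∘ S ∘ φrev = id := by
  intro B φrev
  have hSinv : S.Involutive := congrFun hS
  have hpiecewise : S ∘ φrev = B.piecewise (S ∘ φ) id := by
    funext x
    by_cases hx : x ∈ B
    · simp only [Function.comp_apply, φrev, if_pos hx, Set.piecewise_eq_of_mem _ _ _ hx]
    · simp only [Function.comp_apply, φrev, if_neg hx, Set.piecewise_eq_of_notMem _ _ _ hx,
        hSinv x, id]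
  have hinv : (B.piecewise (S ∘ φ) id).Involutive :=
    .piecewise_id (hSinv.mapsTo_reversibilityCheckSet φ A)
      fun x hx => hSinv.comp_self_apply_of_mem_reversibilityCheckSet φ A hx
  change (S ∘ φrev) ∘ (S ∘ φrev) = id
  rw [hpiecewise, hinv.comp_self]
end
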